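/- Let ε ∈ (0,1), let Z be a random variable taking values in [a,b] with E[Z] ≠ 0, and let (d_m)_{m≥1} be a sequence in (0,1) with log(3/d_m)/m → 0 as m → ∞. Then M = min{ m ≥ 1 : c_m ≤ ε |Z̄_m| } is finite almost surely. -/

import Mathlib

/-!
Since every `Z i` lies in `[a, b]`, so does `Z̄_m`, hence `V̄_m ≤ (b - a)²`; together with
`log (3 / d_m) / m → 0` this forces `c_m → 0` along every sample path. By the strong law of large
numbers `ε |Z̄_m| → ε |E Z| > 0` almost surely, so on that event `c_m ≤ ε |Z̄_m|` for all large `m`.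
-/

open MeasureTheory ProbabilityTheory Filter

noncomputable def empMean {Ω : Type*} (Z : ℕ → Ω → ℝ) (m : ℕ) (ω : Ω) : ℝ :=
  (∑ i ∈ Finset.range m, Z i ω) / m

noncomputable def empVar {Ω : Type*} (Z : ℕ → Ω → ℝ) (m : ℕ) (ω : Ω) : ℝ :=
  (∑ i ∈ Finset.range m, (Z i ω - empMean Z m ω) ^ 2) / m

/-- Half-length `c_m = sqrt(2 V̄_m log(3/d_m)/m) + 3(b-a) log(3/d_m)/m` of the
confidence interval of level `1 - d_m`. -/
noncomputable def confRad {Ω : Type*} (a b : ℝ) (d : ℕ → ℝ) (Z : ℕ → Ω → ℝ)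
    (m : ℕ) (ω : Ω) : ℝ :=
  Real.sqrt (2 * empVar Z m ω * Real.log (3 / d m) / m)
    + 3 * (b - a) * Real.log (3 / d m) / m

section Empirical

variable {Ω : Type*} {Z : ℕ → Ω → ℝ} {a b : ℝ} {ω : Ω}

theorem empMean_mem_Icc (hZ : ∀ i, Z i ω ∈ Set.Icc a b) {m : ℕ} (hm : m ≠ 0) :
    empMean Z m ω ∈ Set.Icc a b := by
  have hm' : (0 : ℝ) < m := by positivity
  constructor
  · rw [empMean, le_div_iff₀ hm']
    simpa [mul_comm] using Finset.card_nsmul_le_sum (Finset.range m) (Z · ω) a fun i _ => (hZ i).1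
  · rw [empMean, div_le_iff₀ hm']
    simpa [mul_comm] using Finset.sum_le_card_nsmul (Finset.range m) (Z · ω) b fun i _ => (hZ i).2

theorem empVar_nonneg (Z : ℕ → Ω → ℝ) (m : ℕ) (ω : Ω) : 0 ≤ empVar Z m ω := by
  unfold empVar
  positivity

theorem empVar_le_sq_sub (hZ : ∀ i, Z i ω ∈ Set.Icc a b) (m : ℕ) :
    empVar Z m ω ≤ (b - a) ^ 2 := by
  rcases Nat.eq_zero_or_pos m with rfl | hm
  · simp [empVar, sq_nonneg]
  have hmean := empMean_mem_Icc hZ hm.ne'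
  rw [empVar, div_le_iff₀ (by positivity)]
  calc ∑ i ∈ Finset.range m, (Z i ω - empMean Z m ω) ^ 2
      ≤ ∑ _i ∈ Finset.range m, (b - a) ^ 2 := Finset.sum_le_sum fun i _ =>
        sq_le_sq' (by linarith [(hZ i).1, hmean.2]) (by linarith [(hZ i).2, hmean.1])
    _ = (b - a) ^ 2 * m := by simp [mul_comm]

theorem tendsto_confRad_zero {d : ℕ → ℝ} (hZ : ∀ i, Z i ω ∈ Set.Icc a b)
    (hd : Tendsto (fun m : ℕ => Real.log (3 / d m) / m) atTop (nhds 0)) :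
    Tendsto (fun m => confRad a b d Z m ω) atTop (nhds 0) := by
  have hvar : Tendsto (fun m => 2 * empVar Z m ω * (Real.log (3 / d m) / m)) atTop (nhds 0) :=
    bdd_le_mul_tendsto_zero (b := 0) (B := 2 * (b - a) ^ 2)
      (.of_forall fun m => by linarith [empVar_nonneg Z m ω])
      (.of_forall fun m => by linarith [empVar_le_sq_sub hZ m]) hd
  simpa [confRad, mul_div_assoc] using
    ((Real.continuous_sqrt.tendsto 0).comp hvar).add (hd.const_mul (3 * (b - a)))

end Empirical

theorem stmt_14_general {Ω : Type*} {mΩ : MeasurableSpace Ω} (P : Measure Ω)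
    [IsProbabilityMeasure P] (a b : ℝ) (Z : ℕ → Ω → ℝ)
    (hindep : iIndepFun Z P)
    (hident : ∀ i, IdentDistrib (Z i) (Z 0) P P)
    (hbdd : ∀ i, ∀ᵐ ω ∂P, Z i ω ∈ Set.Icc a b)
    (hmean : ∫ ω, Z 0 ω ∂P ≠ 0)
    (ε : ℝ) (hε : ε ∈ Set.Ioo (0 : ℝ) 1)
    (d : ℕ → ℝ)
    (hdlim : Tendsto (fun m : ℕ => Real.log (3 / d m) / m) atTop (nhds 0)) :
    ∀ᵐ ω ∂P, ∃ m : ℕ, 1 ≤ m ∧ confRad a b d Z m ω ≤ ε * |empMean Z m ω| := by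
  have hint : Integrable (Z 0) P := .of_mem_Icc a b (hident 0).aemeasurable_fst (hbdd 0)
  filter_upwards [strong_law_ae_real Z hint (fun i j hij => hindep.indepFun hij) hident,
    ae_all_iff.2 hbdd] with ω hslln hZ
  have hgap : Tendsto (fun m => ε * |empMean Z m ω| - confRad a b d Z m ω) atTop
      (nhds (ε * |∫ ω, Z 0 ω ∂P|)) := by
    simpa [empMean] using (hslln.abs.const_mul ε).sub (tendsto_confRad_zero hZ hdlim)
  obtain ⟨m, hm, hpos⟩ := ((eventually_ge_atTop 1).and
    (hgap.eventually (lt_mem_nhds (mul_pos hε.1 (abs_pos.2 hmean))))).exists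
  exact ⟨m, hm, by linarith⟩

/-- the stopping time `M = min{m ≥ 1 : c_m ≤ ε |Z̄_m|}` is finite
almost surely, i.e. almost surely some `m ≥ 1` satisfies the stopping criterion. -/
theorem stmt_14 {Ω : Type*} {mΩ : MeasurableSpace Ω} (P : Measure Ω)
    [IsProbabilityMeasure P] (a b : ℝ) (Z : ℕ → Ω → ℝ)
    (hmeas : ∀ i, Measurable (Z i))
    (hindep : iIndepFun Z P)
    (hident : ∀ i, IdentDistrib (Z i) (Z 0) P P)
    (hbdd : ∀ i, ∀ᵐ ω ∂P, Z i ω ∈ Set.Icc a b)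
    (hmean : ∫ ω, Z 0 ω ∂P ≠ 0)
    (ε : ℝ) (hε : ε ∈ Set.Ioo (0 : ℝ) 1)
    (d : ℕ → ℝ) (hd : ∀ m, 1 ≤ m → d m ∈ Set.Ioo (0 : ℝ) 1)
    (hdlim : Tendsto (fun m : ℕ => Real.log (3 / d m) / m) atTop (nhds 0)) :
    ∀ᵐ ω ∂P, ∃ m : ℕ, 1 ≤ m ∧ confRad a b d Z m ω ≤ ε * |empMean Z m ω| :=
  stmt_14_general (mΩ := mΩ) P a b Z hindep hident hbdd hmean ε hε d hdlim
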